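/- Let κ be a field of characteristic not 2, t₀, t₁ ∈ κ with (t₀,t₁) ≠ (0,0). Let W be the 6-dimensional space κ³ ⊕ (κ³)* with the symplectic form β((v,f),(w,g)) = g(v) − f(w). Let e₁,e₂,e₃ be the standard basis of κ³ and x₁,x₂,x₃ the dual basis. Then the vectors v₁ = −t₀²e₁ + t₀t₁(e₂ − x₂) + t₁²x₃, v₂ = t₀(e₂ + x₂) + 2t₁x₁, v₃ = t₁(e₂ + x₂) + 2t₀e₃ are linearly independent and span a totally isotropic 3-dimensional subspace of W, which equals its own annihilator with respect to β. -/

import Mathlib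

/-!
The form `β` is nondegenerate on the `6`-dimensional space `W`, so every subspace `E` satisfies
`dim E + dim E^⊥ = 6`. A totally isotropic `E` of dimension `3` therefore lies in an `E^⊥` of the
same dimension, and the two coincide. For independence, the first components of `v₁, v₂, v₃`
have determinant `-2 t₀⁴` and the second components `2 t₁⁴`, one of which is nonzero.
-/

open Module Submodule
open LinearMap (BilinForm ker)

namespace LinearMap.BilinForm

variable {R M : Type*} [CommRing R] [AddCommGroup M] [Module R M]

theorem span_range_le_orthogonal {ι : Type*} {B : BilinForm R M} {v : ι → M}
    (h : ∀ i j, B (v i) (v j) = 0) :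
    span R (Set.range v) ≤ B.orthogonal (span R (Set.range v)) := by
  rw [span_le]
  rintro _ ⟨j, rfl⟩ x hx
  have hker : span R (Set.range v) ≤ ker (B.flip (v j)) := by
    rw [span_le]
    rintro _ ⟨i, rfl⟩
    exact h i j
  exact hker hx

variable {K V : Type*} [Field K] [AddCommGroup V] [Module K V] [FiniteDimensional K V]

theorem orthogonal_eq_self_of_le_orthogonal {B : BilinForm K V} (hB : B.Nondegenerate)
    {E : Submodule K V} (hE : E ≤ B.orthogonal E) (hdim : 2 * finrank K E = finrank K V) :
    B.orthogonal E = E :=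
  (eq_of_le_of_finrank_le hE (by rw [finrank_orthogonal hB]; omega)).symm

end LinearMap.BilinForm

theorem linearIndependent_of_det_comp_ne_zero {R M ι : Type*} [CommRing R] [IsDomain R]
    [AddCommGroup M] [Module R M] [Fintype ι] [DecidableEq ι] (f : M →ₗ[R] ι → R) (v : ι → M)
    (h : (Matrix.of fun i => f (v i)).det ≠ 0) : LinearIndependent R v :=
  .of_comp f (Matrix.linearIndependent_rows_of_det_ne_zero h)

section Symplectic

variable (ι R : Type*) [Fintype ι] [CommRing R]

/-- `β((v,f),(w,g)) = g(v) − f(w)` on `Rᶥ ⊕ (Rᶥ)*`, the dual identified with `Rᶥ` via the dual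
basis. -/
def standardSymplecticForm : BilinForm R ((ι → R) × (ι → R)) :=
  LinearMap.mk₂ R (fun p q => q.2 ⬝ᵥ p.1 - p.2 ⬝ᵥ q.1)
    (fun p p' q => by simp only [Prod.fst_add, Prod.snd_add, dotProduct_add, add_dotProduct]; abel)
    (fun c p q => by simp only [Prod.smul_fst, Prod.smul_snd, dotProduct_smul, smul_dotProduct,
      smul_sub])
    (fun p q q' => by simp only [Prod.fst_add, Prod.snd_add, dotProduct_add, add_dotProduct]; abel)
    (fun c p q => by simp only [Prod.smul_fst, Prod.smul_snd, dotProduct_smul, smul_dotProduct,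
      smul_sub])

variable {ι R}

@[simp]
theorem standardSymplecticForm_apply (p q : (ι → R) × (ι → R)) :
    standardSymplecticForm ι R p q = (∑ i, q.2 i * p.1 i) - ∑ i, p.2 i * q.1 i :=
  rfl

theorem standardSymplecticForm_isAlt : LinearMap.IsAlt (standardSymplecticForm ι R) :=
  fun p => sub_self (p.2 ⬝ᵥ p.1)

theorem standardSymplecticForm_nondegenerate [DecidableEq ι] :
    (standardSymplecticForm ι R).Nondegenerate := by
  refine standardSymplecticForm_isAlt.isRefl.nondegenerate_iff_separatingLeft.2 fun p hp => ?_
  ext i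
  · simpa [Pi.single_apply] using hp (0, Pi.single i 1)
  · simpa [Pi.single_apply] using hp (Pi.single i 1, 0)

end Symplectic

section LagrangianFrame

variable {R : Type*} [CommRing R]

/-- The vectors `v₁, v₂, v₃` of the statement. -/
def lagrangianFrame (t₀ t₁ : R) : Fin 3 → (Fin 3 → R) × (Fin 3 → R) :=
  ![(![-t₀ ^ 2, t₀ * t₁, 0], ![0, -(t₀ * t₁), t₁ ^ 2]),
    (![0, t₀, 0], ![2 * t₁, t₀, 0]),
    (![0, t₁, 2 * t₀], ![0, t₁, 0])]

theorem standardSymplecticForm_lagrangianFrame (t₀ t₁ : R) (i j : Fin 3) :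
    standardSymplecticForm (Fin 3) R (lagrangianFrame t₀ t₁ i) (lagrangianFrame t₀ t₁ j) = 0 := by
  fin_cases i <;> fin_cases j <;> simp [lagrangianFrame, Fin.sum_univ_three] <;> ring

theorem linearIndependent_lagrangianFrame {K : Type*} [Field K] (h2 : (2 : K) ≠ 0) {t₀ t₁ : K}
    (h : ¬(t₀ = 0 ∧ t₁ = 0)) : LinearIndependent K (lagrangianFrame t₀ t₁) := by
  rcases not_and_or.1 h with ht | ht
  · have hdet : (Matrix.of fun i => (lagrangianFrame t₀ t₁ i).1).det = -(2 * t₀ ^ 4) := by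
      simp [lagrangianFrame, Matrix.det_fin_three]
      ring
    exact linearIndependent_of_det_comp_ne_zero (LinearMap.fst K _ _) _
      (hdet ▸ neg_ne_zero.2 (mul_ne_zero h2 (pow_ne_zero 4 ht)))
  · have hdet : (Matrix.of fun i => (lagrangianFrame t₀ t₁ i).2).det = 2 * t₁ ^ 4 := by
      simp [lagrangianFrame, Matrix.det_fin_three]
      ring
    exact linearIndependent_of_det_comp_ne_zero (LinearMap.snd K _ _) _
      (hdet ▸ mul_ne_zero h2 (pow_ne_zero 4 ht))

end LagrangianFrame

/-- Fiberwise content of the skew-symmetric case of the lemma on `φ'_{3,6}`: in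
`W = κ³ ⊕ (κ³)*` (the dual identified with `κ³` via the dual basis) with the symplectic
form `β((v,f),(w,g)) = g(v) − f(w)`, char κ ≠ 2, the vectors
`v₁ = −t₀²e₁ + t₀t₁(e₂ − x₂) + t₁²x₃`, `v₂ = t₀(e₂ + x₂) + 2t₁x₁`,
`v₃ = t₁(e₂ + x₂) + 2t₀e₃` are linearly independent and span a 3-dimensional totally
isotropic subspace equal to its own annihilator. -/
theorem stmt12 {κ : Type*} [Field κ] (h2 : (2 : κ) ≠ 0) (t₀ t₁ : κ)
    (h : ¬(t₀ = 0 ∧ t₁ = 0)) :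
    let β : ((Fin 3 → κ) × (Fin 3 → κ)) → ((Fin 3 → κ) × (Fin 3 → κ)) → κ :=
      fun p q => (∑ i, q.2 i * p.1 i) - (∑ i, p.2 i * q.1 i)
    let v₁ : (Fin 3 → κ) × (Fin 3 → κ) :=
      (![-t₀ ^ 2, t₀ * t₁, 0], ![0, -(t₀ * t₁), t₁ ^ 2])
    let v₂ : (Fin 3 → κ) × (Fin 3 → κ) := (![0, t₀, 0], ![2 * t₁, t₀, 0])
    let v₃ : (Fin 3 → κ) × (Fin 3 → κ) := (![0, t₁, 2 * t₀], ![0, t₁, 0])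
    let E : Submodule κ ((Fin 3 → κ) × (Fin 3 → κ)) := Submodule.span κ {v₁, v₂, v₃}
    LinearIndependent κ ![v₁, v₂, v₃] ∧
    Module.finrank κ E = 3 ∧
    (∀ u ∈ E, ∀ w ∈ E, β u w = 0) ∧
    (∀ x : (Fin 3 → κ) × (Fin 3 → κ), x ∈ E ↔ ∀ e ∈ E, β e x = 0) := by
  intro β v₁ v₂ v₃ E
  set B := standardSymplecticForm (Fin 3) κ
  have hE : E = span κ (Set.range (lagrangianFrame t₀ t₁)) := by
    rw [lagrangianFrame, Matrix.range_cons, Matrix.range_cons_cons_empty, Set.singleton_union]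
  have hli : LinearIndependent κ (lagrangianFrame t₀ t₁) := linearIndependent_lagrangianFrame h2 h
  have hdim : finrank κ E = 3 := hE ▸ finrank_span_eq_card hli
  have hiso : E ≤ B.orthogonal E :=
    hE ▸ BilinForm.span_range_le_orthogonal (standardSymplecticForm_lagrangianFrame t₀ t₁)
  have hlag : B.orthogonal E = E :=
    BilinForm.orthogonal_eq_self_of_le_orthogonal standardSymplecticForm_nondegenerate hiso
      (by simp [hdim])
  exact ⟨hli, hdim, fun u hu w hw => hiso hw u hu, fun x => (SetLike.ext_iff.1 hlag x).symm⟩
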